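/- arXiv:2304.06193 — 2 statements merged into one kernel-verified Lean document; each statement's English description precedes it below -/
import Mathlib

section
/- Let f, k, c be globally Lipschitz maps and suppose the closed-loop base system (plant with observer-based controller) is contracting with transients and Lipschitz (Assumption A1), the observer is correct (A2) and contracting and Lipschitz (A3). If the Youla parameter Q is a contracting and Lipschitz system, then the closed-loop system of the plant with the augmented controller K_Q is contracting with transients: any two closed-loop state trajectories (x, x̃, q) from different initial conditions under the same bounded reference input r satisfy |x̄¹_t - x̄²_t| ≤ β(x̄¹₀, x̄²₀)·α_CL^t for some α_CL ∈ [0,1). -/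
/-- Theorem 1 (contraction part): under a robustly stabilizing base controller (A1),
observer correctness (A2), a contracting and Lipschitz observer (A3), globally Lipschitz
maps (A4), and a contracting and Lipschitz Youla parameter `Q`, the closed-loop system
under the Youla-augmented controller `K_Q` is contracting with transients. -/
theorem youla_closed_loop_contracting
    {n nq m p : ℕ}
    (f : EuclideanSpace ℝ (Fin n) → EuclideanSpace ℝ (Fin m) → EuclideanSpace ℝ (Fin n))
    (c : EuclideanSpace ℝ (Fin n) → EuclideanSpace ℝ (Fin p))
    (k : EuclideanSpace ℝ (Fin n) → EuclideanSpace ℝ (Fin m))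
    (fo : EuclideanSpace ℝ (Fin n) → EuclideanSpace ℝ (Fin m) → EuclideanSpace ℝ (Fin p) →
      EuclideanSpace ℝ (Fin n))
    (fq : EuclideanSpace ℝ (Fin nq) → EuclideanSpace ℝ (Fin m) → EuclideanSpace ℝ (Fin p) →
      EuclideanSpace ℝ (Fin nq))
    (hq : EuclideanSpace ℝ (Fin nq) → EuclideanSpace ℝ (Fin m) → EuclideanSpace ℝ (Fin p) →
      EuclideanSpace ℝ (Fin m))
    -- A4: globally Lipschitz maps
    (Lf Lc Lk : ℝ)
    (hLf : ∀ x₁ x₂ u₁ u₂, ‖f x₁ u₁ - f x₂ u₂‖ ≤ Lf * (‖x₁ - x₂‖ + ‖u₁ - u₂‖))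
    (hLc : ∀ x₁ x₂, ‖c x₁ - c x₂‖ ≤ Lc * ‖x₁ - x₂‖)
    (hLk : ∀ x₁ x₂, ‖k x₁ - k x₂‖ ≤ Lk * ‖x₁ - x₂‖)
    -- A2: observer correctness
    (hA2 : ∀ x u, fo x u (c x) = f x u)
    -- A3: contracting and Lipschitz observer
    (Lo γou γoy : ℝ) (hLo0 : 0 ≤ Lo) (hLo1 : Lo < 1)
    (hA3c : ∀ x₁ x₂ u y, ‖fo x₁ u y - fo x₂ u y‖ ≤ Lo * ‖x₁ - x₂‖)
    (hA3l : ∀ x u₁ u₂ y₁ y₂,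
      ‖fo x u₁ y₁ - fo x u₂ y₂‖ ≤ γou * ‖u₁ - u₂‖ + γoy * ‖y₁ - y₂‖)
    -- Q contracting and Lipschitz
    (Lq γqr γqy Lhq : ℝ) (hLq0 : 0 ≤ Lq) (hLq1 : Lq < 1)
    (hQc : ∀ q₁ q₂ r y, ‖fq q₁ r y - fq q₂ r y‖ ≤ Lq * ‖q₁ - q₂‖)
    (hQl : ∀ q r₁ r₂ y₁ y₂,
      ‖fq q r₁ y₁ - fq q r₂ y₂‖ ≤ γqr * ‖r₁ - r₂‖ + γqy * ‖y₁ - y₂‖)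
    (hHq : ∀ q₁ q₂ r₁ r₂ y₁ y₂,
      ‖hq q₁ r₁ y₁ - hq q₂ r₂ y₂‖ ≤
        Lhq * (‖q₁ - q₂‖ + ‖r₁ - r₂‖ + ‖y₁ - y₂‖))
    -- A1: the base closed loop (plant with observer-based controller) is a uniform
    -- contraction in its state and Lipschitz in the additional input
    (Lcl γcl : ℝ) (hLcl0 : 0 ≤ Lcl) (hLcl1 : Lcl < 1) (hγcl : 0 ≤ γcl)
    (hA1c : ∀ x₁ xhat1 x₂ xhat2 w,
      ‖f x₁ (k xhat1 + w) - f x₂ (k xhat2 + w)‖ +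
        ‖fo xhat1 (k xhat1 + w) (c x₁) - fo xhat2 (k xhat2 + w) (c x₂)‖ ≤
      Lcl * (‖x₁ - x₂‖ + ‖xhat1 - xhat2‖))
    (hA1l : ∀ x xhat w₁ w₂,
      ‖f x (k xhat + w₁) - f x (k xhat + w₂)‖ +
        ‖fo xhat (k xhat + w₁) (c x) - fo xhat (k xhat + w₂) (c x)‖ ≤ γcl * ‖w₁ - w₂‖)
    -- bounded reference input
    (r : ℕ → EuclideanSpace ℝ (Fin m)) (rbar : ℝ) (hr : ∀ t, ‖r t‖ ≤ rbar)
    -- two closed-loop trajectories under the Youla-augmented controller K_Q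
    (x₁ xhat1 x₂ xhat2 : ℕ → EuclideanSpace ℝ (Fin n))
    (q₁ q₂ : ℕ → EuclideanSpace ℝ (Fin nq))
    (ytil1 ytil2 : ℕ → EuclideanSpace ℝ (Fin p))
    (ubar1 ubar2 : ℕ → EuclideanSpace ℝ (Fin m))
    (hytil1 : ∀ t, ytil1 t = c (x₁ t) - c (xhat1 t))
    (hytil2 : ∀ t, ytil2 t = c (x₂ t) - c (xhat2 t))
    (hubar1 : ∀ t, ubar1 t = k (xhat1 t) + hq (q₁ t) (r t) (ytil1 t) + r t)
    (hubar2 : ∀ t, ubar2 t = k (xhat2 t) + hq (q₂ t) (r t) (ytil2 t) + r t)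
    (hx₁ : ∀ t, x₁ (t + 1) = f (x₁ t) (ubar1 t))
    (hx₂ : ∀ t, x₂ (t + 1) = f (x₂ t) (ubar2 t))
    (hxhat1 : ∀ t, xhat1 (t + 1) = fo (xhat1 t) (ubar1 t) (c (x₁ t)))
    (hxhat2 : ∀ t, xhat2 (t + 1) = fo (xhat2 t) (ubar2 t) (c (x₂ t)))
    (hq₁ : ∀ t, q₁ (t + 1) = fq (q₁ t) (r t) (ytil1 t))
    (hq₂ : ∀ t, q₂ (t + 1) = fq (q₂ t) (r t) (ytil2 t)) :
    ∃ (β αCL : ℝ), 0 ≤ β ∧ 0 ≤ αCL ∧ αCL < 1 ∧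
      ∀ t : ℕ, ‖x₁ t - x₂ t‖ + ‖xhat1 t - xhat2 t‖ + ‖q₁ t - q₂ t‖ ≤ β * αCL ^ t := by
  -- abbreviations for the three error quantities
  set Lc' : ℝ := max Lc 0 with hLc'def
  set Lhq' : ℝ := max Lhq 0 with hLhq'def
  set γqy' : ℝ := max γqy 0 with hγqy'def
  have hLc'0 : (0:ℝ) ≤ Lc' := le_max_right _ _
  have hLhq'0 : (0:ℝ) ≤ Lhq' := le_max_right _ _
  have hγqy'0 : (0:ℝ) ≤ γqy' := le_max_right _ _
  set E : ℕ → ℝ := fun t => ‖x₁ t - xhat1 t‖ + ‖x₂ t - xhat2 t‖ with hEdef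
  set Qd : ℕ → ℝ := fun t => ‖q₁ t - q₂ t‖ with hQddef
  set S : ℕ → ℝ := fun t => ‖x₁ t - x₂ t‖ + ‖xhat1 t - xhat2 t‖ with hSdef
  have hE0 : ∀ t, 0 ≤ E t := fun t => add_nonneg (norm_nonneg _) (norm_nonneg _)
  have hQd0 : ∀ t, 0 ≤ Qd t := fun t => norm_nonneg _
  have hS0 : ∀ t, 0 ≤ S t := fun t => add_nonneg (norm_nonneg _) (norm_nonneg _)
  -- Lipschitz bound for the innovation difference
  have hY : ∀ t, ‖ytil1 t - ytil2 t‖ ≤ Lc' * E t := by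
    intro t
    rw [hytil1, hytil2]
    have h1 : ‖c (x₁ t) - c (xhat1 t)‖ ≤ Lc' * ‖x₁ t - xhat1 t‖ :=
      (hLc _ _).trans (mul_le_mul_of_nonneg_right (le_max_left _ _) (norm_nonneg _))
    have h2 : ‖c (x₂ t) - c (xhat2 t)‖ ≤ Lc' * ‖x₂ t - xhat2 t‖ :=
      (hLc _ _).trans (mul_le_mul_of_nonneg_right (le_max_left _ _) (norm_nonneg _))
    calc ‖(c (x₁ t) - c (xhat1 t)) - (c (x₂ t) - c (xhat2 t))‖
        ≤ ‖c (x₁ t) - c (xhat1 t)‖ + ‖c (x₂ t) - c (xhat2 t)‖ := norm_sub_le _ _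
      _ ≤ Lc' * ‖x₁ t - xhat1 t‖ + Lc' * ‖x₂ t - xhat2 t‖ := add_le_add h1 h2
      _ = Lc' * E t := by simp [hEdef]; ring
  -- observer error contraction (A2 + A3)
  have hE : ∀ t, E (t + 1) ≤ Lo * E t := by
    intro t
    have h1 : ‖x₁ (t+1) - xhat1 (t+1)‖ ≤ Lo * ‖x₁ t - xhat1 t‖ := by
      rw [hx₁, hxhat1, ← hA2 (x₁ t) (ubar1 t)]
      exact hA3c _ _ _ _
    have h2 : ‖x₂ (t+1) - xhat2 (t+1)‖ ≤ Lo * ‖x₂ t - xhat2 t‖ := by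
      rw [hx₂, hxhat2, ← hA2 (x₂ t) (ubar2 t)]
      exact hA3c _ _ _ _
    have : E (t+1) = ‖x₁ (t+1) - xhat1 (t+1)‖ + ‖x₂ (t+1) - xhat2 (t+1)‖ := rfl
    rw [this]
    calc ‖x₁ (t+1) - xhat1 (t+1)‖ + ‖x₂ (t+1) - xhat2 (t+1)‖
        ≤ Lo * ‖x₁ t - xhat1 t‖ + Lo * ‖x₂ t - xhat2 t‖ := add_le_add h1 h2
      _ = Lo * E t := by simp [hEdef]; ring
  -- Youla state difference recursion
  have hQd : ∀ t, Qd (t + 1) ≤ Lq * Qd t + γqy' * (Lc' * E t) := by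
    intro t
    have hsplit : Qd (t+1) ≤ ‖fq (q₁ t) (r t) (ytil1 t) - fq (q₂ t) (r t) (ytil1 t)‖ +
        ‖fq (q₂ t) (r t) (ytil1 t) - fq (q₂ t) (r t) (ytil2 t)‖ := by
      have : Qd (t+1) = ‖fq (q₁ t) (r t) (ytil1 t) - fq (q₂ t) (r t) (ytil2 t)‖ := by
        simp [hQddef, hq₁, hq₂]
      rw [this]
      have := norm_sub_le_norm_sub_add_norm_sub (fq (q₁ t) (r t) (ytil1 t))
        (fq (q₂ t) (r t) (ytil1 t)) (fq (q₂ t) (r t) (ytil2 t))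
      linarith
    have h1 : ‖fq (q₁ t) (r t) (ytil1 t) - fq (q₂ t) (r t) (ytil1 t)‖ ≤ Lq * Qd t :=
      hQc _ _ _ _
    have h2 : ‖fq (q₂ t) (r t) (ytil1 t) - fq (q₂ t) (r t) (ytil2 t)‖ ≤
        γqy' * (Lc' * E t) := by
      have := hQl (q₂ t) (r t) (r t) (ytil1 t) (ytil2 t)
      simp only [sub_self, norm_zero, mul_zero, zero_add] at this
      have h3 : γqy * ‖ytil1 t - ytil2 t‖ ≤ γqy' * ‖ytil1 t - ytil2 t‖ :=
        mul_le_mul_of_nonneg_right (le_max_left _ _) (norm_nonneg _)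
      have h4 : γqy' * ‖ytil1 t - ytil2 t‖ ≤ γqy' * (Lc' * E t) :=
        mul_le_mul_of_nonneg_left (hY t) hγqy'0
      linarith
    linarith
  -- the directed-input difference entering the base loop
  have hW : ∀ t, ‖(hq (q₁ t) (r t) (ytil1 t) + r t) - (hq (q₂ t) (r t) (ytil2 t) + r t)‖ ≤
      Lhq' * (Qd t + Lc' * E t) := by
    intro t
    have heq : (hq (q₁ t) (r t) (ytil1 t) + r t) - (hq (q₂ t) (r t) (ytil2 t) + r t) =
        hq (q₁ t) (r t) (ytil1 t) - hq (q₂ t) (r t) (ytil2 t) := by abel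
    rw [heq]
    have h1 := hHq (q₁ t) (q₂ t) (r t) (r t) (ytil1 t) (ytil2 t)
    simp only [sub_self, norm_zero, add_zero] at h1
    have h2 : Lhq * (‖q₁ t - q₂ t‖ + ‖ytil1 t - ytil2 t‖) ≤
        Lhq' * (‖q₁ t - q₂ t‖ + ‖ytil1 t - ytil2 t‖) :=
      mul_le_mul_of_nonneg_right (le_max_left _ _)
        (add_nonneg (norm_nonneg _) (norm_nonneg _))
    have h3 : Lhq' * (‖q₁ t - q₂ t‖ + ‖ytil1 t - ytil2 t‖) ≤ Lhq' * (Qd t + Lc' * E t) := by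
      apply mul_le_mul_of_nonneg_left _ hLhq'0
      have := hY t
      simp only [hQddef]
      linarith
    exact le_trans h1 (le_trans h2 h3)
  -- base closed-loop recursion (A1)
  have hS : ∀ t, S (t + 1) ≤ Lcl * S t + γcl * (Lhq' * (Qd t + Lc' * E t)) := by
    intro t
    set w₁ := hq (q₁ t) (r t) (ytil1 t) + r t with hw₁
    set w₂ := hq (q₂ t) (r t) (ytil2 t) + r t with hw₂
    have hu1 : ubar1 t = k (xhat1 t) + w₁ := by rw [hubar1, hw₁, add_assoc]
    have hu2 : ubar2 t = k (xhat2 t) + w₂ := by rw [hubar2, hw₂, add_assoc]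
    have hstep : S (t+1) = ‖f (x₁ t) (k (xhat1 t) + w₁) - f (x₂ t) (k (xhat2 t) + w₂)‖ +
        ‖fo (xhat1 t) (k (xhat1 t) + w₁) (c (x₁ t)) -
          fo (xhat2 t) (k (xhat2 t) + w₂) (c (x₂ t))‖ := by
      simp only [hSdef, hx₁, hx₂, hxhat1, hxhat2, hu1, hu2]
    have t1 : ‖f (x₁ t) (k (xhat1 t) + w₁) - f (x₂ t) (k (xhat2 t) + w₂)‖ ≤
        ‖f (x₁ t) (k (xhat1 t) + w₁) - f (x₂ t) (k (xhat2 t) + w₁)‖ +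
        ‖f (x₂ t) (k (xhat2 t) + w₁) - f (x₂ t) (k (xhat2 t) + w₂)‖ :=
      norm_sub_le_norm_sub_add_norm_sub _ _ _
    have t2 : ‖fo (xhat1 t) (k (xhat1 t) + w₁) (c (x₁ t)) -
          fo (xhat2 t) (k (xhat2 t) + w₂) (c (x₂ t))‖ ≤
        ‖fo (xhat1 t) (k (xhat1 t) + w₁) (c (x₁ t)) -
          fo (xhat2 t) (k (xhat2 t) + w₁) (c (x₂ t))‖ +
        ‖fo (xhat2 t) (k (xhat2 t) + w₁) (c (x₂ t)) -
          fo (xhat2 t) (k (xhat2 t) + w₂) (c (x₂ t))‖ :=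
      norm_sub_le_norm_sub_add_norm_sub _ _ _
    have hc := hA1c (x₁ t) (xhat1 t) (x₂ t) (xhat2 t) w₁
    have hl := hA1l (x₂ t) (xhat2 t) w₁ w₂
    have hw : ‖w₁ - w₂‖ ≤ Lhq' * (Qd t + Lc' * E t) := hW t
    have hγw : γcl * ‖w₁ - w₂‖ ≤ γcl * (Lhq' * (Qd t + Lc' * E t)) :=
      mul_le_mul_of_nonneg_left hw hγcl
    rw [hstep]
    have hSeq : Lcl * (‖x₁ t - x₂ t‖ + ‖xhat1 t - xhat2 t‖) = Lcl * S t := rfl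
    linarith [hc, hl, hγw, t1, t2]
  -- choose the contraction rate and the Lyapunov weights
  set m₀ : ℝ := max (max Lcl Lq) Lo with hm₀def
  have hm₀0 : 0 ≤ m₀ := le_trans hLcl0 (le_trans (le_max_left _ _) (le_max_left _ _))
  have hm₀1 : m₀ < 1 := by
    simp only [hm₀def, max_lt_iff]
    exact ⟨⟨hLcl1, hLq1⟩, hLo1⟩
  set α : ℝ := (1 + m₀) / 2 with hαdef
  have hα1 : α < 1 := by rw [hαdef]; linarith
  have hαm : m₀ < α := by rw [hαdef]; linarith
  have hα0 : 0 ≤ α := by rw [hαdef]; linarith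
  have hLclα : Lcl ≤ α := le_of_lt (lt_of_le_of_lt
    (le_trans (le_max_left _ _) (le_max_left _ _)) hαm)
  have hLqα : Lq < α := lt_of_le_of_lt (le_trans (le_max_right _ _) (le_max_left _ _)) hαm
  have hLoα : Lo < α := lt_of_le_of_lt (le_max_right _ _) hαm
  set a : ℝ := max 1 (γcl * Lhq' / (α - Lq)) with hadef
  have ha1 : 1 ≤ a := le_max_left _ _
  have ha0 : 0 ≤ a := le_trans zero_le_one ha1
  have hcoefQ : γcl * Lhq' + a * Lq ≤ α * a := by
    have h1 : γcl * Lhq' / (α - Lq) ≤ a := le_max_right _ _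
    have h2 : 0 < α - Lq := by linarith
    have h3 : γcl * Lhq' ≤ a * (α - Lq) := by
      rwa [div_le_iff₀ h2] at h1
    nlinarith
  set b : ℝ := (a * (γqy' * Lc') + γcl * (Lhq' * Lc')) / (α - Lo) with hbdef
  have hLo' : 0 < α - Lo := by linarith
  have hbnum : 0 ≤ a * (γqy' * Lc') + γcl * (Lhq' * Lc') := by positivity
  have hb0 : 0 ≤ b := div_nonneg hbnum (le_of_lt hLo')
  have hcoefE : a * (γqy' * Lc') + γcl * (Lhq' * Lc') + b * Lo ≤ α * b := by
    have h3 : b * (α - Lo) = a * (γqy' * Lc') + γcl * (Lhq' * Lc') := by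
      rw [hbdef, div_mul_cancel₀]
      exact ne_of_gt hLo'
    nlinarith
  -- the Lyapunov function
  set W : ℕ → ℝ := fun t => S t + a * Qd t + b * E t with hWdef
  have hWstep : ∀ t, W (t + 1) ≤ α * W t := by
    intro t
    have h1 := hS t
    have h2 : a * Qd (t+1) ≤ a * (Lq * Qd t + γqy' * (Lc' * E t)) :=
      mul_le_mul_of_nonneg_left (hQd t) ha0
    have h3 : b * E (t+1) ≤ b * (Lo * E t) := mul_le_mul_of_nonneg_left (hE t) hb0
    have hq' : (γcl * Lhq' + a * Lq) * Qd t ≤ (α * a) * Qd t :=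
      mul_le_mul_of_nonneg_right hcoefQ (hQd0 t)
    have he' : (a * (γqy' * Lc') + γcl * (Lhq' * Lc') + b * Lo) * E t ≤ (α * b) * E t :=
      mul_le_mul_of_nonneg_right hcoefE (hE0 t)
    have hs' : Lcl * S t ≤ α * S t := mul_le_mul_of_nonneg_right hLclα (hS0 t)
    show S (t+1) + a * Qd (t+1) + b * E (t+1) ≤ α * (S t + a * Qd t + b * E t)
    calc S (t+1) + a * Qd (t+1) + b * E (t+1)
        ≤ (Lcl * S t + γcl * (Lhq' * (Qd t + Lc' * E t))) +
            a * (Lq * Qd t + γqy' * (Lc' * E t)) + b * (Lo * E t) :=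
          add_le_add (add_le_add h1 h2) h3
      _ = Lcl * S t + (γcl * Lhq' + a * Lq) * Qd t +
            (a * (γqy' * Lc') + γcl * (Lhq' * Lc') + b * Lo) * E t := by ring
      _ ≤ α * S t + (α * a) * Qd t + (α * b) * E t :=
          add_le_add (add_le_add hs' hq') he'
      _ = α * (S t + a * Qd t + b * E t) := by ring
  have hWgeo : ∀ t, W t ≤ α ^ t * W 0 := by
    intro t
    induction t with
    | zero => simp
    | succ t ih =>
      calc W (t+1) ≤ α * W t := hWstep t
        _ ≤ α * (α ^ t * W 0) := mul_le_mul_of_nonneg_left ih hα0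
        _ = α ^ (t+1) * W 0 := by ring
  have hW0 : 0 ≤ W 0 := by
    show 0 ≤ S 0 + a * Qd 0 + b * E 0
    have := hS0 0
    have h1 : 0 ≤ a * Qd 0 := mul_nonneg ha0 (hQd0 0)
    have h2 : 0 ≤ b * E 0 := mul_nonneg hb0 (hE0 0)
    linarith
  refine ⟨W 0, α, hW0, hα0, hα1, fun t => ?_⟩
  have h1 : S t + Qd t ≤ W t := by
    show S t + Qd t ≤ S t + a * Qd t + b * E t
    have hq1 : Qd t ≤ a * Qd t := le_mul_of_one_le_left (hQd0 t) ha1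
    have hbe : 0 ≤ b * E t := mul_nonneg hb0 (hE0 t)
    linarith
  have h2 := hWgeo t
  have h3 : ‖x₁ t - x₂ t‖ + ‖xhat1 t - xhat2 t‖ + ‖q₁ t - q₂ t‖ = S t + Qd t := rfl
  rw [h3]
  calc S t + Qd t ≤ W t := h1
    _ ≤ α ^ t * W 0 := h2
    _ = W 0 * α ^ t := by ring
end

section
/- Under the assumptions of Theorem 1, the closed-loop map r ↦ z (with z_t = (x_t, u_t)) under the Youla-augmented controller K_Q is Lipschitz with transients: there exists γ̄ ≥ 0 and a function κ of the initial conditions such that ‖z¹ - z²‖_T ≤ γ̄‖r¹ - r²‖_T + κ for all T ∈ ℕ, where γ̄ = γ(1 + γ_{q_r}) in terms of the Lipschitz constant γ of the base closed loop and the Lipschitz constant γ_{q_r} of Q with respect to r. -/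
/-- Truncated ℓ₂ norm of a sequence over `[0, T]`. -/
noncomputable def truncNorm {E : Type*} [NormedAddCommGroup E] (x : ℕ → E) (T : ℕ) : ℝ :=
  Real.sqrt (∑ t ∈ Finset.range (T + 1), ‖x t‖ ^ 2)

lemma truncNorm_nonneg {E : Type*} [NormedAddCommGroup E] (x : ℕ → E) (T : ℕ) :
    0 ≤ truncNorm x T := Real.sqrt_nonneg _

lemma truncNorm_le_of_le {E : Type*} [NormedAddCommGroup E] {x : ℕ → E} {f : ℕ → ℝ}
    (hf : ∀ t, ‖x t‖ ≤ f t) (T : ℕ) :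
    truncNorm x T ≤ Real.sqrt (∑ t ∈ Finset.range (T + 1), f t ^ 2) := by
  apply Real.sqrt_le_sqrt
  apply Finset.sum_le_sum
  intro t _
  exact pow_le_pow_left₀ (norm_nonneg _) (hf t) 2

lemma sqrt_sum_eq_norm (T : ℕ) (f : ℕ → ℝ) :
    Real.sqrt (∑ t ∈ Finset.range (T + 1), f t ^ 2) =
      ‖(WithLp.equiv 2 (Fin (T + 1) → ℝ)).symm (fun i => f i.val)‖ := by
  rw [EuclideanSpace.norm_eq]
  rw [Finset.sum_range fun i => f i ^ 2]
  congr 1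
  apply Finset.sum_congr rfl
  intro i _
  simp [Real.norm_eq_abs, sq_abs]

lemma truncNorm_add_le {E : Type*} [NormedAddCommGroup E] (a b : ℕ → E) (T : ℕ) :
    truncNorm (fun t => a t + b t) T ≤ truncNorm a T + truncNorm b T := by
  have h1 : truncNorm (fun t => a t + b t) T ≤
      Real.sqrt (∑ t ∈ Finset.range (T + 1), (‖a t‖ + ‖b t‖) ^ 2) :=
    truncNorm_le_of_le (fun t => norm_add_le _ _) T
  refine h1.trans ?_
  have ha : truncNorm a T =
      ‖(WithLp.equiv 2 (Fin (T + 1) → ℝ)).symm (fun i => ‖a i.val‖)‖ :=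
    sqrt_sum_eq_norm T _
  have hb : truncNorm b T =
      ‖(WithLp.equiv 2 (Fin (T + 1) → ℝ)).symm (fun i => ‖b i.val‖)‖ :=
    sqrt_sum_eq_norm T _
  have hab : Real.sqrt (∑ t ∈ Finset.range (T + 1), (‖a t‖ + ‖b t‖) ^ 2) =
      ‖(WithLp.equiv 2 (Fin (T + 1) → ℝ)).symm (fun i => ‖a i.val‖) +
        (WithLp.equiv 2 (Fin (T + 1) → ℝ)).symm (fun i => ‖b i.val‖)‖ := by
    rw [sqrt_sum_eq_norm T (fun t => ‖a t‖ + ‖b t‖)]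
    rfl
  rw [hab, ha, hb]
  exact norm_add_le _ _

/-- Theorem 1 (Lipschitz part): the closed-loop map `r ↦ z` under the Youla-augmented
controller is Lipschitz with transients with constant `γ̄ = γ(1 + γ_{q_r})`. -/
theorem youla_closed_loop_lipschitz
    {nz nr ny nx : ℕ}
    (z1 z2 : ℕ → EuclideanSpace ℝ (Fin nz))
    (r1 r2 util1 util2 : ℕ → EuclideanSpace ℝ (Fin nr))
    (ytil1 ytil2 : ℕ → EuclideanSpace ℝ (Fin ny))
    (xtil1 xtil2 : ℕ → EuclideanSpace ℝ (Fin nx))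
    (γ γqr γqy γc κ₁ κ₂ βo α : ℝ)
    (hγ : 0 ≤ γ) (hγqr : 0 ≤ γqr) (hγqy : 0 ≤ γqy) (hγc : 0 ≤ γc)
    (hκ₁ : 0 ≤ κ₁) (hκ₂ : 0 ≤ κ₂) (hβo : 0 ≤ βo) (hα0 : 0 ≤ α) (hα1 : α < 1)
    -- A1: the base closed loop is Lipschitz with transients w.r.t. its total input util + r
    (hbase : ∀ T, truncNorm (fun t => z1 t - z2 t) T ≤
      γ * truncNorm (fun t => (r1 t + util1 t) - (r2 t + util2 t)) T + κ₁)
    -- Q is Lipschitz with transients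
    (hQ : ∀ T, truncNorm (fun t => util1 t - util2 t) T ≤
      γqr * truncNorm (fun t => r1 t - r2 t) T +
        γqy * truncNorm (fun t => ytil1 t - ytil2 t) T + κ₂)
    -- the innovations pass through the Lipschitz output map
    (hytil1 : ∀ t, ‖ytil1 t‖ ≤ γc * ‖xtil1 t‖) (hytil2 : ∀ t, ‖ytil2 t‖ ≤ γc * ‖xtil2 t‖)
    -- exponentially decaying observer errors
    (hxtil1 : ∀ t, ‖xtil1 t‖ ≤ βo * α ^ t) (hxtil2 : ∀ t, ‖xtil2 t‖ ≤ βo * α ^ t) :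
    ∃ κ : ℝ, 0 ≤ κ ∧ ∀ T : ℕ,
      truncNorm (fun t => z1 t - z2 t) T ≤
        γ * (1 + γqr) * truncNorm (fun t => r1 t - r2 t) T + κ := by
  -- uniform ℓ₂ bound on the innovations difference
  have hα2 : α ^ 2 < 1 := by nlinarith
  have hα2' : (0:ℝ) ≤ α ^ 2 := sq_nonneg _
  set Γ : ℝ := 2 * γc * βo * Real.sqrt ((1 - α ^ 2)⁻¹) with hΓdef
  have hΓ0 : 0 ≤ Γ := by positivity
  have hy : ∀ T, truncNorm (fun t => ytil1 t - ytil2 t) T ≤ Γ := by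
    intro T
    have hpt : ∀ t, ‖ytil1 t - ytil2 t‖ ≤ 2 * γc * βo * α ^ t := by
      intro t
      have h1 := (hytil1 t).trans (by nlinarith [hxtil1 t, hytil1 t] :
        γc * ‖xtil1 t‖ ≤ γc * (βo * α ^ t))
      have h2 := (hytil2 t).trans (by nlinarith [hxtil2 t] :
        γc * ‖xtil2 t‖ ≤ γc * (βo * α ^ t))
      calc ‖ytil1 t - ytil2 t‖ ≤ ‖ytil1 t‖ + ‖ytil2 t‖ := norm_sub_le _ _
        _ ≤ γc * (βo * α ^ t) + γc * (βo * α ^ t) := add_le_add h1 h2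
        _ = 2 * γc * βo * α ^ t := by ring
    have h3 := truncNorm_le_of_le hpt T
    refine h3.trans ?_
    have hsum : ∑ t ∈ Finset.range (T + 1), (2 * γc * βo * α ^ t) ^ 2 =
        (2 * γc * βo) ^ 2 * ∑ t ∈ Finset.range (T + 1), (α ^ 2) ^ t := by
      rw [Finset.mul_sum]
      apply Finset.sum_congr rfl
      intro t _
      ring
    rw [hsum, Real.sqrt_mul (sq_nonneg _), Real.sqrt_sq (by positivity)]
    rw [hΓdef]
    apply mul_le_mul_of_nonneg_left _ (by positivity)
    apply Real.sqrt_le_sqrt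
    calc ∑ t ∈ Finset.range (T + 1), (α ^ 2) ^ t
        ≤ ∑' t : ℕ, (α ^ 2) ^ t :=
          Summable.sum_le_tsum _ (fun t _ => pow_nonneg hα2' _)
            (summable_geometric_of_lt_one hα2' hα2)
      _ = (1 - α ^ 2)⁻¹ := tsum_geometric_of_lt_one hα2' hα2
  refine ⟨γ * (γqy * Γ + κ₂) + κ₁, by positivity, fun T => ?_⟩
  have hsplit : (fun t => (r1 t + util1 t) - (r2 t + util2 t)) =
      fun t => (r1 t - r2 t) + (util1 t - util2 t) := by
    funext t; abel
  have h1 := hbase T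
  rw [hsplit] at h1
  have h2 := truncNorm_add_le (fun t => r1 t - r2 t) (fun t => util1 t - util2 t) T
  have h3 := hQ T
  have h4 := hy T
  set R := truncNorm (fun t => r1 t - r2 t) T with hR
  have hR0 : 0 ≤ R := truncNorm_nonneg _ _
  have h5 := mul_le_mul_of_nonneg_left h2 hγ
  have h6 := mul_le_mul_of_nonneg_left h3 hγ
  have h7 := mul_le_mul_of_nonneg_left h4 (mul_nonneg hγ hγqy)
  nlinarith [truncNorm_nonneg (fun t => util1 t - util2 t) T]
end
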